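/- For every integer n ≥ 3, the quantity s_n = (∑_{k=1}^{n−2} 1/k) + 13/(12(n−1)) + 5/(12n) − ln n satisfies s_n − γ > 1/(12n³) + 11/(120n⁴). -/

import Mathlib

noncomputable def s (n : ℕ) : ℝ :=
  (∑ k ∈ Finset.Icc 1 (n - 2), (1 : ℝ) / k) + 13 / (12 * ((n : ℝ) - 1)) + 5 / (12 * n)
    - Real.log n

/-!
The sequence `a n = s n - (1 / (12 n³) + 11 / (120 n⁴))` is strictly decreasing for `n ≥ 3`
and tends to `γ`, so `γ < a n`. The decrease `a n - a (n + 1)` equals `log (1 + 1 / n)` minus a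
rational function of `n`; replacing the logarithm by its alternating Taylor polynomial of degree 7
minus the remainder bound `n⁻⁸ / (1 - n⁻¹)` leaves a rational function whose numerator
`350 n⁶ + 400 n⁵ - 445 n⁴ - 3057 n³ - 5028 n² - 3580 n - 960` is positive for `n ≥ 3`.
-/

open Real Filter Finset Topology

noncomputable def correction (x : ℝ) : ℝ := 1 / (12 * x ^ 3) + 11 / (120 * x ^ 4)

lemma sum_range_alternating_sub_le_log_one_add {t : ℝ} (ht : |t| < 1) (n : ℕ) :
    ∑ i ∈ range n, (-1) ^ i * t ^ (i + 1) / (i + 1) - |t| ^ (n + 1) / (1 - |t|)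
      ≤ log (1 + t) := by
  have h := abs_log_sub_add_sum_range_le (x := -t) (by rwa [abs_neg]) n
  have hsum : ∑ i ∈ range n, (-t) ^ (i + 1) / (i + 1)
      = -∑ i ∈ range n, (-1) ^ i * t ^ (i + 1) / (i + 1) := by
    rw [← sum_neg_distrib]
    exact sum_congr rfl fun i _ => by ring
  rw [abs_neg, sub_neg_eq_add, hsum] at h
  linarith [(abs_le.mp h).1]

lemma rational_lt_log_one_add_inv {x : ℝ} (hx : 3 ≤ x) :
    2 / (3 * x) + 5 / (12 * (x + 1)) - 1 / (12 * (x - 1)) + correction x - correction (x + 1)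
      < log (1 + 1 / x) := by
  have hx0 : 0 < x := by linarith
  have hx1 : 0 < x - 1 := by linarith
  have ht : |1 / x| = 1 / x := abs_of_pos (by positivity)
  have htaylor := sum_range_alternating_sub_le_log_one_add
    (ht ▸ (div_lt_one hx0).mpr (by linarith)) 7
  rw [ht] at htaylor
  have hnum : 0 < 350 * x ^ 6 + 400 * x ^ 5 - 445 * x ^ 4 - 3057 * x ^ 3 - 5028 * x ^ 2
      - 3580 * x - 960 := by
    nlinarith [pow_nonneg (show (0 : ℝ) ≤ x - 3 by linarith) 3,
      pow_nonneg (show (0 : ℝ) ≤ x - 3 by linarith) 4,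
      pow_nonneg (show (0 : ℝ) ≤ x - 3 by linarith) 5,
      pow_nonneg (show (0 : ℝ) ≤ x - 3 by linarith) 6]
  have hgap : ∑ i ∈ range 7, (-1) ^ i * (1 / x) ^ (i + 1) / (i + 1)
        - (1 / x) ^ (7 + 1) / (1 - 1 / x)
        - (2 / (3 * x) + 5 / (12 * (x + 1)) - 1 / (12 * (x - 1))
          + correction x - correction (x + 1))
      = (350 * x ^ 6 + 400 * x ^ 5 - 445 * x ^ 4 - 3057 * x ^ 3 - 5028 * x ^ 2
          - 3580 * x - 960) / (840 * x ^ 7 * (x - 1) * (x + 1) ^ 4) := by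
    rw [show 1 - 1 / x = (x - 1) / x by field_simp]
    have := hx0.ne'
    have := hx1.ne'
    simp only [correction, sum_range_succ, sum_range_zero, one_div_pow]
    push_cast
    field_simp
    ring
  have : 0 < (350 * x ^ 6 + 400 * x ^ 5 - 445 * x ^ 4 - 3057 * x ^ 3 - 5028 * x ^ 2
      - 3580 * x - 960) / (840 * x ^ 7 * (x - 1) * (x + 1) ^ 4) := by positivity
  linarith

lemma s_eq_harmonic_sub_log_add {n : ℕ} (hn : 2 ≤ n) :
    s n = (harmonic n - log n) + (1 / (12 * ((n : ℝ) - 1)) - 7 / (12 * n)) := by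
  obtain ⟨m, rfl⟩ := Nat.exists_eq_add_of_le' hn
  have hharm : (harmonic (m + 2) : ℝ)
      = ∑ k ∈ Icc 1 m, (1 : ℝ) / k + 1 / (m + 1) + 1 / (m + 2) := by
    simp only [harmonic_succ, harmonic_eq_sum_Icc, one_div]
    push_cast
    ring
  simp only [s, Nat.add_sub_cancel, hharm]
  push_cast
  have : (m : ℝ) + 1 ≠ 0 := by positivity
  have : (m : ℝ) + 2 ≠ 0 := by positivity
  rw [show (m : ℝ) + 2 - 1 = m + 1 by ring]
  field_simp
  ring

lemma s_sub_s_succ {n : ℕ} (hn : 2 ≤ n) :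
    s n - s (n + 1)
      = log (1 + 1 / n) - (2 / (3 * n) + 5 / (12 * (n + 1)) - 1 / (12 * (n - 1))) := by
  have hn0 : (n : ℝ) ≠ 0 := by positivity
  have hn1 : (n : ℝ) - 1 ≠ 0 := by
    rw [sub_ne_zero]
    exact_mod_cast (by omega : n ≠ 1)
  have hlog : log (1 + 1 / n) = log (n + 1) - log n := by
    rw [← log_div (by positivity) hn0, add_div, div_self hn0]
  rw [s_eq_harmonic_sub_log_add hn, s_eq_harmonic_sub_log_add (by omega), harmonic_succ, hlog]
  push_cast
  have : (n : ℝ) + 1 ≠ 0 := by positivity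
  rw [show (n : ℝ) + 1 - 1 = n by ring]
  field_simp
  ring

lemma tendsto_const_div_mul_sub_atTop (c a : ℝ) {b : ℝ} (hb : 0 < b) :
    Tendsto (fun n : ℕ => c / (b * (n - a))) atTop (𝓝 0) :=
  tendsto_const_nhds.div_atTop <| (tendsto_atTop_add_const_right _ (-a)
    tendsto_natCast_atTop_atTop).const_mul_atTop hb

lemma tendsto_s : Tendsto s atTop (𝓝 eulerMascheroniConstant) := by
  have htail := (tendsto_const_div_mul_sub_atTop 1 1 (b := 12) (by norm_num)).sub
    (tendsto_const_div_mul_sub_atTop 7 0 (b := 12) (by norm_num))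
  rw [sub_zero] at htail
  have hlim := tendsto_harmonic_sub_log.add htail
  rw [add_zero] at hlim
  refine hlim.congr' ?_
  filter_upwards [eventually_ge_atTop 2] with n hn
  simpa using (s_eq_harmonic_sub_log_add hn).symm

lemma tendsto_correction : Tendsto correction atTop (𝓝 0) := by
  have h (c b : ℝ) (hb : 0 < b) {k : ℕ} (hk : k ≠ 0) :
      Tendsto (fun x : ℝ => c / (b * x ^ k)) atTop (𝓝 0) :=
    tendsto_const_nhds.div_atTop ((tendsto_pow_atTop hk).const_mul_atTop hb)
  have hsum := (h 1 12 (by norm_num) three_ne_zero).add (h 11 120 (by norm_num) four_ne_zero)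
  rw [add_zero] at hsum
  exact hsum

lemma s_sub_correction_succ_lt {n : ℕ} (hn : 3 ≤ n) :
    s (n + 1) - correction (n + 1 : ℕ) < s n - correction n := by
  have hstep := s_sub_s_succ (by omega : 2 ≤ n)
  have hlog := rational_lt_log_one_add_inv (x := n) (by exact_mod_cast hn)
  push_cast
  linarith

lemma eulerMascheroniConstant_le_s_sub_correction {n : ℕ} (hn : 3 ≤ n) :
    eulerMascheroniConstant ≤ s n - correction n := by
  set a : ℕ → ℝ := fun k => s (k + 3) - correction (k + 3 : ℕ)
  have hanti : StrictAnti a := strictAnti_nat_of_succ_lt fun k => s_sub_correction_succ_lt (by omega)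
  have hlim : Tendsto a atTop (𝓝 eulerMascheroniConstant) := by
    have := (tendsto_s.sub (tendsto_correction.comp tendsto_natCast_atTop_atTop))
    rw [sub_zero] at this
    exact (tendsto_add_atTop_iff_nat 3).mpr this
  obtain ⟨k, rfl⟩ := Nat.exists_eq_add_of_le' hn
  exact hanti.antitone.le_of_tendsto hlim k

theorem lower_bound (n : ℕ) (hn : 3 ≤ n) :
    1 / (12 * (n : ℝ) ^ 3) + 11 / (120 * (n : ℝ) ^ 4)
      < s n - Real.eulerMascheroniConstant := by
  have hγ := eulerMascheroniConstant_le_s_sub_correction (by omega : 3 ≤ n + 1)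
  have hdecr := s_sub_correction_succ_lt hn
  simp only [correction] at hγ hdecr
  linarith
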